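/- Let w be a word over {a,b} and x a letter. Then K_{xw} = K_w + 1 if xw is closed, and K_{xw} = K_w if xw is open. Moreover, if xw is trapezoidal, then R_{xw} = R_w if xw is closed, and R_{xw} = R_w + 1 if xw is open. -/
import Mathlib


/-- The two-letter alphabet {a, b}. -/
inductive AB : Type
  | a : AB
  | b : AB
deriving DecidableEq, Repr

/-- A (finite) word over {a, b}. -/
abbrev Word := List AB

open AB

/-- `u` occurs in `w` at position `i`. -/
def OccursAt (u w : Word) (i : ℕ) : Prop :=
  i + u.length ≤ w.length ∧ (w.drop i).take u.length = u

/-- `u` occurs exactly once in `w` (is unrepeated in `w`). -/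
def OccursOnce (u w : Word) : Prop := ∃! i, OccursAt u w i

/-- `u` is a right special factor of `w`: both `ua` and `ub` are factors of `w`. -/
def IsRightSpecial (u w : Word) : Prop := (u ++ [a]) <:+: w ∧ (u ++ [b]) <:+: w

/-- `u` is a left special factor of `w`: both `au` and `bu` are factors of `w`. -/
def IsLeftSpecial (u w : Word) : Prop := ([a] ++ u) <:+: w ∧ ([b] ++ u) <:+: w

/-- `K w`: the length of the shortest unrepeated suffix of `w`. -/
noncomputable def Kp (w : Word) : ℕ := sInf {n | ∃ s : Word, s <:+ w ∧ s.length = n ∧ OccursOnce s w}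

/-- `H w`: the length of the shortest unrepeated prefix of `w`. -/
noncomputable def Hp (w : Word) : ℕ := sInf {n | ∃ p : Word, p <+: w ∧ p.length = n ∧ OccursOnce p w}

/-- `R w`: the smallest `n ≥ 0` such that `w` has no right special factor of length `n`. -/
noncomputable def Rp (w : Word) : ℕ := sInf {n | ∀ u : Word, u.length = n → ¬ IsRightSpecial u w}

/-- `L w`: the smallest `n ≥ 0` such that `w` has no left special factor of length `n`. -/
noncomputable def Lp (w : Word) : ℕ := sInf {n | ∀ u : Word, u.length = n → ¬ IsLeftSpecial u w}

/-- A word `w` is trapezoidal if `|w| = K w + R w`. -/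
def IsTrapezoidal (w : Word) : Prop := w.length = Kp w + Rp w

/-- A finite word over `{a,b}` is Sturmian iff it is balanced: there is no word `u`
with both `aua` and `bub` factors of `w`. -/
def IsSturmian (w : Word) : Prop :=
  ¬ ∃ u : Word, ([a] ++ u ++ [a]) <:+: w ∧ ([b] ++ u ++ [b]) <:+: w

/-- A nonempty word is closed if it has a border (a proper prefix which is also a suffix)
whose only occurrences in `w` are as a prefix and as a suffix. -/
def IsClosedWord (w : Word) : Prop :=
  w ≠ [] ∧ ∃ v : Word, v <+: w ∧ v.length < w.length ∧ v <:+ w ∧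
    ∀ i : ℕ, OccursAt v w i → i = 0 ∨ i + v.length = w.length

/-- A nonempty word is open if it is not closed. -/
def IsOpenWord (w : Word) : Prop := w ≠ [] ∧ ¬ IsClosedWord w

/-- Central words: `a^n`, `b^n`, or `u a b v = v b a u`. -/
def IsCentral (w : Word) : Prop :=
  (∃ n : ℕ, w = List.replicate n a) ∨ (∃ n : ℕ, w = List.replicate n b) ∨
  (∃ u v : Word, w = u ++ [a, b] ++ v ∧ w = v ++ [b, a] ++ u)

/-- The minimal period of `w`: `|w|` minus the length of the longest border of `w`. -/
noncomputable def minPeriod (w : Word) : ℕ :=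
  w.length - sSup {n | ∃ v : Word, v.length = n ∧ v <+: w ∧ v ≠ w ∧ v <:+ w}

-- ### auxiliary infrastructure


lemma occursAt_iff {u w : Word} {i : ℕ} :
    OccursAt u w i ↔ ∃ p s : Word, p.length = i ∧ w = p ++ u ++ s := by
  constructor
  · rintro ⟨h1, h2⟩
    refine ⟨w.take i, w.drop (i + u.length), ?_, ?_⟩
    · rw [List.length_take]; omega
    · conv_lhs => rw [← List.take_append_drop i w]
      rw [List.append_assoc]
      congr 1
      conv_lhs => rw [← List.take_append_drop u.length (w.drop i)]
      rw [h2, List.drop_drop]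
      try (congr 1; omega)
  · rintro ⟨p, s, hp, rfl⟩
    subst hp
    constructor
    · simp
      try omega
    · rw [List.append_assoc, List.drop_left, List.take_left]

lemma occursAt_infix {u w : Word} {i : ℕ} (h : OccursAt u w i) : u <:+: w := by
  obtain ⟨p, s, _, rfl⟩ := occursAt_iff.mp h
  exact ⟨p, s, by simp⟩

lemma infix_occurs {u w : Word} (h : u <:+: w) : ∃ i, OccursAt u w i := by
  obtain ⟨p, s, rfl⟩ := h
  exact ⟨p.length, occursAt_iff.mpr ⟨p, s, rfl, by simp⟩⟩

lemma occursAt_zero_iff {u w : Word} : OccursAt u w 0 ↔ u <+: w := by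
  rw [occursAt_iff]
  constructor
  · rintro ⟨p, s, hp, rfl⟩
    rw [List.length_eq_zero_iff] at hp
    subst hp
    exact ⟨s, by simp⟩
  · rintro ⟨s, rfl⟩
    exact ⟨[], s, rfl, by simp⟩

lemma occursAt_cons_succ {u w : Word} {x : AB} {i : ℕ} :
    OccursAt u (x :: w) (i + 1) ↔ OccursAt u w i := by
  rw [occursAt_iff, occursAt_iff]
  constructor
  · rintro ⟨p, s, hp, he⟩
    cases p with
    | nil => simp at hp
    | cons c p =>
      simp at hp he
      exact ⟨p, s, hp, by rw [he.2, List.append_assoc]⟩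
  · rintro ⟨p, s, hp, rfl⟩
    exact ⟨x :: p, s, by simp [hp], by simp⟩

lemma occursAt_cons_cases {u w : Word} {x : AB} {j : ℕ} (h : OccursAt u (x :: w) j) :
    (j = 0 ∧ u <+: (x :: w)) ∨ ∃ i, j = i + 1 ∧ OccursAt u w i := by
  cases j with
  | zero => exact Or.inl ⟨rfl, occursAt_zero_iff.mp h⟩
  | succ i => exact Or.inr ⟨i, rfl, occursAt_cons_succ.mp h⟩

lemma occursAt_of_prefix {v u w : Word} {i : ℕ} (hv : v <+: u) (h : OccursAt u w i) :
    OccursAt v w i := by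
  obtain ⟨t, rfl⟩ := hv
  obtain ⟨p, s, hp, rfl⟩ := occursAt_iff.mp h
  exact occursAt_iff.mpr ⟨p, t ++ s, hp, by simp⟩

lemma occursAt_of_suffix {v u w : Word} {i : ℕ} (hv : v <:+ u) (h : OccursAt u w i) :
    OccursAt v w (i + (u.length - v.length)) := by
  obtain ⟨t, rfl⟩ := hv
  obtain ⟨p, s, hp, rfl⟩ := occursAt_iff.mp h
  refine occursAt_iff.mpr ⟨p ++ t, s, ?_, by simp⟩
  simp [hp]

lemma occursAt_suffix {s w : Word} (h : s <:+ w) : OccursAt s w (w.length - s.length) := by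
  obtain ⟨t, rfl⟩ := h
  refine occursAt_iff.mpr ⟨t, [], ?_, by simp⟩
  simp

lemma suffix_eq_of_length {s t w : Word} (h1 : s <:+ w) (h2 : t <:+ w)
    (h : s.length = t.length) : s = t := by
  rw [List.suffix_iff_eq_drop] at h1 h2
  rw [h1, h2, h]

lemma suffix_of_suffix_le {s t w : Word} (h1 : s <:+ w) (h2 : t <:+ w)
    (hl : s.length ≤ t.length) : s <:+ t := by
  rw [← List.reverse_prefix] at h1 h2 ⊢
  exact List.prefix_of_prefix_length_le h1 h2 (by simpa using hl)

lemma prefix_eq_of_length {s t w : Word} (h1 : s <+: w) (h2 : t <+: w)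
    (h : s.length = t.length) : s = t :=
  (List.prefix_of_prefix_length_le h1 h2 h.le).eq_of_length h

/-- suffix of `w` of length `n`. -/
def suf (w : Word) (n : ℕ) : Word := w.drop (w.length - n)

lemma suf_suffix (w : Word) (n : ℕ) : suf w n <:+ w := List.drop_suffix _ _

lemma suf_length {w : Word} {n : ℕ} (h : n ≤ w.length) : (suf w n).length = n := by
  simp [suf]; omega

lemma suf_cons {w : Word} {x : AB} {n : ℕ} (h : n ≤ w.length) : suf (x :: w) n = suf w n := by
  unfold suf
  rw [show (x :: w).length - n = (w.length - n) + 1 by simp; omega]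
  rfl

lemma suffix_eq_suf {s w : Word} (h : s <:+ w) : s = suf w s.length := by
  rw [List.suffix_iff_eq_drop] at h
  exact h

/-- the suffix of `w` of length `n` has another (earlier) occurrence. -/
def RepSuf (w : Word) (n : ℕ) : Prop := ∃ i, i + n < w.length ∧ OccursAt (suf w n) w i

-- ### Kp machinery

lemma occursOnce_self (w : Word) : OccursOnce w w := by
  refine ⟨0, ⟨by simp, by simp⟩, fun i hi => ?_⟩
  have := hi.1
  omega

lemma Kp_mem (w : Word) :
    ∃ s : Word, s <:+ w ∧ s.length = Kp w ∧ OccursOnce s w :=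
  Nat.sInf_mem (⟨w.length, w, List.suffix_refl w, rfl, occursOnce_self w⟩ :
    Set.Nonempty {n | ∃ s : Word, s <:+ w ∧ s.length = n ∧ OccursOnce s w})

lemma Kp_le_length (w : Word) : Kp w ≤ w.length := by
  obtain ⟨s, hs, hl, _⟩ := Kp_mem w
  exact hl ▸ hs.length_le

lemma Kp_eq_of {w : Word} {m : ℕ}
    (hm : ∃ s : Word, s <:+ w ∧ s.length = m ∧ OccursOnce s w)
    (hlt : ∀ k, k < m → ¬ ∃ s : Word, s <:+ w ∧ s.length = k ∧ OccursOnce s w) :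
    Kp w = m := by
  have h1 : Kp w ≤ m := Nat.sInf_le hm
  rcases h1.lt_or_eq with h | h
  · exact absurd (Kp_mem w) (hlt _ h)
  · exact h

lemma mem_K_iff {w : Word} {n : ℕ} (hn : n ≤ w.length) :
    (∃ s : Word, s <:+ w ∧ s.length = n ∧ OccursOnce s w) ↔ ¬ RepSuf w n := by
  constructor
  · rintro ⟨s, hs, hl, j0, hocc0, huniq⟩ ⟨j, hj, hocc⟩
    have hse : s = suf w n := hl ▸ suffix_eq_suf hs
    have h1 : OccursAt s w (w.length - n) := by
      have := occursAt_suffix hs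
      rwa [hl] at this
    have h2 : OccursAt s w j := hse ▸ hocc
    have e1 := huniq _ h1
    have e2 := huniq _ h2
    omega
  · intro h
    refine ⟨suf w n, suf_suffix w n, suf_length hn, w.length - n, ?_, ?_⟩
    · have := occursAt_suffix (suf_suffix w n)
      rwa [suf_length hn] at this
    · intro j hj
      have hjl := hj.1
      rw [suf_length hn] at hjl
      by_contra hne
      exact h ⟨j, by omega, hj⟩

lemma not_repSuf_Kp (w : Word) : ¬ RepSuf w (Kp w) :=
  (mem_K_iff (Kp_le_length w)).mp (Kp_mem w)

lemma repSuf_of_lt_Kp {w : Word} {k : ℕ} (hk : k < Kp w) : RepSuf w k := by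
  have h1 : k ∉ {n | ∃ s : Word, s <:+ w ∧ s.length = n ∧ OccursOnce s w} :=
    Nat.notMem_of_lt_sInf hk
  have h2 : k ≤ w.length := le_trans hk.le (Kp_le_length w)
  by_contra h
  exact h1 ((mem_K_iff h2).mpr h)

lemma repSuf_cons {w : Word} {x : AB} {k : ℕ} (hk : k ≤ w.length) (h : RepSuf w k) :
    RepSuf (x :: w) k := by
  obtain ⟨i, hi, hocc⟩ := h
  exact ⟨i + 1, by simp; omega, by rw [suf_cons hk]; exact occursAt_cons_succ.mpr hocc⟩

-- ### the two K lemmas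

lemma Kp_cons_closed {w : Word} {x : AB} (h : IsClosedWord (x :: w)) :
    Kp (x :: w) = Kp w + 1 := by
  obtain ⟨hne, v, hvp, hvlt, hvs, hvocc⟩ := h
  simp only [List.length_cons] at hvlt
  have hvw : v.length ≤ w.length := by omega
  -- every k < |v| is a repeated suffix length of w
  have repw : ∀ k, k < v.length → RepSuf w k := by
    intro k hk
    have h1 : suf w k <:+ (x :: w) := (suf_suffix w k).trans (List.suffix_cons x w)
    have h2 : suf w k <:+ v :=
      suffix_of_suffix_le h1 hvs (by rw [suf_length (by omega)]; omega)
    have h3 : OccursAt v (x :: w) 0 := occursAt_zero_iff.mpr hvp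
    have h4 := occursAt_of_suffix h2 h3
    rw [suf_length (by omega : k ≤ w.length)] at h4
    have h5 : 0 + (v.length - k) = (v.length - k - 1) + 1 := by omega
    rw [h5] at h4
    exact ⟨v.length - k - 1, by omega, occursAt_cons_succ.mp h4⟩
  -- |v| is not a repeated suffix length of w
  have hvsw : v <:+ w := suffix_of_suffix_le hvs (List.suffix_cons x w) hvw
  have hveq : v = suf w v.length := suffix_eq_suf hvsw
  have nrepv : ¬ RepSuf w v.length := by
    rintro ⟨i, hi, hocc⟩
    have h4 : OccursAt v (x :: w) (i + 1) := by
      rw [hveq]; exact occursAt_cons_succ.mpr hocc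
    rcases hvocc _ h4 with h | h
    · omega
    · simp only [List.length_cons] at h; omega
  have hKw : Kp w = v.length :=
    Kp_eq_of ((mem_K_iff hvw).mpr nrepv)
      (fun k hk hmem => ((mem_K_iff (by omega)).mp hmem) (repw k hk))
  rw [hKw]
  have hlen1 : v.length + 1 ≤ (x :: w).length := by simp; omega
  have nrep1 : ¬ RepSuf (x :: w) (v.length + 1) := by
    rintro ⟨i, hi, hocc⟩
    have hvsufs : v <:+ suf (x :: w) (v.length + 1) :=
      suffix_of_suffix_le hvs (suf_suffix _ _) (by rw [suf_length hlen1]; omega)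
    have h2 := occursAt_of_suffix hvsufs hocc
    rw [suf_length hlen1] at h2
    have h3 : i + (v.length + 1 - v.length) = i + 1 := by omega
    rw [h3] at h2
    rcases hvocc _ h2 with hc | hc
    · omega
    · simp only [List.length_cons] at hi hc; omega
  refine Kp_eq_of ((mem_K_iff hlen1).mpr nrep1) (fun k hk hmem => ?_)
  have hkw : k ≤ w.length := by omega
  refine ((mem_K_iff (by simp; omega)).mp hmem) ?_
  rcases Nat.lt_or_ge k v.length with hkv | hkv
  · exact repSuf_cons hkw (repw k hkv)
  · have hkeq : k = v.length := by omega
    subst hkeq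
    refine ⟨0, by simp; omega, ?_⟩
    rw [← suffix_eq_suf hvs]
    exact occursAt_zero_iff.mpr hvp

lemma Kp_cons_open {w : Word} {x : AB} (h : ¬ IsClosedWord (x :: w)) :
    Kp (x :: w) = Kp w := by
  have hm := Kp_le_length w
  have hm1 : Kp w ≤ (x :: w).length := by simp; omega
  have nrep : ¬ RepSuf (x :: w) (Kp w) := by
    rintro ⟨i, hi, hocc⟩
    rcases occursAt_cons_cases hocc with ⟨hi0, hpre⟩ | ⟨j, rfl, hocc'⟩
    · apply h
      refine ⟨by simp, suf (x :: w) (Kp w), hpre, ?_, suf_suffix _ _, ?_⟩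
      · rw [suf_length hm1]; simp; omega
      · intro j hj
        rcases occursAt_cons_cases hj with ⟨hj0, _⟩ | ⟨j', rfl, hocc''⟩
        · exact Or.inl hj0
        · rw [suf_cons hm] at hocc''
          have hjl := hj.1
          rw [suf_length hm1] at hjl
          rcases Nat.lt_or_ge (j' + Kp w) w.length with hlt | hge
          · exact absurd ⟨j', hlt, hocc''⟩ (not_repSuf_Kp w)
          · right; rw [suf_length hm1]; simp only [List.length_cons] at hjl ⊢; omega
    · rw [suf_cons hm] at hocc'
      simp only [List.length_cons] at hi
      exact absurd ⟨j, by omega, hocc'⟩ (not_repSuf_Kp w)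
  refine Kp_eq_of ((mem_K_iff hm1).mpr nrep) (fun k hk hmem => ?_)
  have hkw : k ≤ w.length := by omega
  exact ((mem_K_iff (by simp; omega)).mp hmem) (repSuf_cons hkw (repSuf_of_lt_Kp hk))

-- ### Rp machinery

lemma TR_top (w : Word) : ∀ u : Word, u.length = w.length → ¬ IsRightSpecial u w := by
  rintro u hu ⟨h1, _⟩
  have := h1.length_le
  simp at this
  omega

lemma Rp_mem (w : Word) : ∀ u : Word, u.length = Rp w → ¬ IsRightSpecial u w :=
  Nat.sInf_mem (⟨w.length, TR_top w⟩ :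
    Set.Nonempty {n | ∀ u : Word, u.length = n → ¬ IsRightSpecial u w})

lemma isRightSpecial_cons {u w : Word} {x : AB} (h : IsRightSpecial u w) :
    IsRightSpecial u (x :: w) :=
  ⟨List.infix_cons h.1, List.infix_cons h.2⟩

lemma suffix_append_letter {u' u : Word} {c : AB} (h : u' <:+ u) : u' ++ [c] <:+ u ++ [c] := by
  obtain ⟨q, rfl⟩ := h
  exact ⟨q, by simp⟩

lemma isRightSpecial_suffix {u' u w : Word} (h : u' <:+ u) (hrs : IsRightSpecial u w) :
    IsRightSpecial u' w :=
  ⟨((suffix_append_letter h).isInfix).trans hrs.1, ((suffix_append_letter h).isInfix).trans hrs.2⟩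

lemma Rp_cons_ge (w : Word) (x : AB) : Rp w ≤ Rp (x :: w) :=
  Nat.sInf_le (fun u hu hRS => Rp_mem (x :: w) u hu (isRightSpecial_cons hRS))

lemma RS_of_two {u' w : Word} {c d : AB} (hcd : c ≠ d) (h1 : u' ++ [c] <:+: w)
    (h2 : u' ++ [d] <:+: w) : IsRightSpecial u' w := by
  cases c <;> cases d
  · exact absurd rfl hcd
  · exact ⟨h1, h2⟩
  · exact ⟨h2, h1⟩
  · exact absurd rfl hcd

lemma extract_aux {u w : Word} {x y y' : AB} (hne : y ≠ y')
    (h1 : (u ++ [y]) <:+: (x :: w)) (h2 : (u ++ [y']) <:+: (x :: w))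
    (hnw : ¬ (u ++ [y]) <:+: w) :
    (u ++ [y]) <+: (x :: w) ∧ (∀ j, OccursAt (u ++ [y]) (x :: w) j → j = 0) ∧
      (u ++ [y']) <:+: w := by
  have honly : ∀ j, OccursAt (u ++ [y]) (x :: w) j → j = 0 := by
    intro j hj
    rcases occursAt_cons_cases hj with ⟨hj0, _⟩ | ⟨i, rfl, hocc⟩
    · exact hj0
    · exact absurd (occursAt_infix hocc) hnw
  obtain ⟨j, hj⟩ := infix_occurs h1
  have hj0 := honly j hj
  subst hj0
  have hpre : (u ++ [y]) <+: (x :: w) := occursAt_zero_iff.mp hj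
  refine ⟨hpre, honly, ?_⟩
  obtain ⟨j', hj'⟩ := infix_occurs h2
  rcases occursAt_cons_cases hj' with ⟨hj0', hpre'⟩ | ⟨i, rfl, hocc⟩
  · exfalso
    have := prefix_eq_of_length hpre hpre' (by simp)
    simp at this
    exact hne this
  · exact occursAt_infix hocc

lemma extract {u w : Word} {x : AB} (hRS : IsRightSpecial u (x :: w))
    (hn : ¬ IsRightSpecial u w) :
    ∃ y y' : AB, y ≠ y' ∧ (u ++ [y]) <+: (x :: w) ∧
      (∀ j, OccursAt (u ++ [y]) (x :: w) j → j = 0) ∧ (u ++ [y']) <:+: w := by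
  rcases not_and_or.mp hn with h | h
  · obtain ⟨p1, p2, p3⟩ := extract_aux (by simp) hRS.1 hRS.2 h
    exact ⟨AB.a, AB.b, by simp, p1, p2, p3⟩
  · obtain ⟨p1, p2, p3⟩ := extract_aux (by simp) hRS.2 hRS.1 h
    exact ⟨AB.b, AB.a, by simp, p1, p2, p3⟩

lemma Rp_cons_closed_le {w : Word} {x : AB} (h : IsClosedWord (x :: w)) :
    Rp (x :: w) ≤ Rp w := by
  apply Nat.sInf_le
  intro u hu hRS
  have hn : ¬ IsRightSpecial u w := Rp_mem w u hu
  obtain ⟨y, y', hne, hpre, honly, hinf⟩ := extract hRS hn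
  obtain ⟨hne0, v, hvp, hvlt, hvs, hvocc⟩ := h
  simp only [List.length_cons] at hvlt
  obtain ⟨j, hj⟩ := infix_occurs hinf
  have hjxw : OccursAt (u ++ [y']) (x :: w) (j + 1) := occursAt_cons_succ.mpr hj
  have hjlen := hj.1
  simp at hjlen
  rcases Nat.lt_or_ge (Rp w) v.length with hvr | hvr
  · -- |v| ≥ |u|+1 : u++[y] occurs at the suffix occurrence of v, which is > 0
    have h1 : (u ++ [y]) <+: v :=
      List.prefix_of_prefix_length_le hpre hvp (by simp [hu]; omega)
    have h2 : OccursAt v (x :: w) ((x :: w).length - v.length) := occursAt_suffix hvs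
    have h3 := occursAt_of_prefix h1 h2
    have h4 := honly _ h3
    simp only [List.length_cons] at h4
    omega
  · -- |v| ≤ |u| : v occurs inside the occurrence of u++[y'] at j+1, internally
    have hupre : u <+: (x :: w) := (List.prefix_append u [y]).trans hpre
    have h1 : v <+: u := List.prefix_of_prefix_length_le hvp hupre (by omega)
    have h2 : v <+: u ++ [y'] := h1.trans (List.prefix_append u [y'])
    have h3 := occursAt_of_prefix h2 hjxw
    rcases hvocc _ h3 with hc | hc
    · omega
    · simp only [List.length_cons] at hc; omega

lemma prefix_two_replicate : ∀ (t : Word) (x : AB) (w : Word),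
    t <+: (x :: w) → t <+: w → t = List.replicate t.length x := by
  intro t
  induction t with
  | nil => intro x w _ _; rfl
  | cons c t ih =>
    intro x w h1 h2
    rw [List.cons_prefix_cons] at h1
    obtain ⟨rfl, h1t⟩ := h1
    obtain ⟨e, rfl⟩ := h2
    have hw : c :: t ++ e = c :: (t ++ e) := by simp
    rw [hw] at h1t
    have := ih c (t ++ e) h1t (List.prefix_append t e)
    rw [List.length_cons, List.replicate_succ]
    exact congrArg (c :: ·) this

lemma Rp_cons_le_succ (w : Word) (x : AB) : Rp (x :: w) ≤ Rp w + 1 := by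
  apply Nat.sInf_le
  intro u hu hRS
  have hdlen : (u.drop 1).length = Rp w := by rw [List.length_drop]; omega
  have hn : ¬ IsRightSpecial u w := fun hrs =>
    Rp_mem w (u.drop 1) hdlen (isRightSpecial_suffix (List.drop_suffix 1 u) hrs)
  obtain ⟨y, y', hne, hpre, honly, hinf⟩ := extract hRS hn
  have hRS' := isRightSpecial_suffix (List.drop_suffix 1 u) hRS
  obtain ⟨z, z', hnez, hpre', _, _⟩ := extract hRS' (Rp_mem w (u.drop 1) hdlen)
  have hupre : u <+: (x :: w) := (List.prefix_append u [y]).trans hpre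
  have hu'pre : u.drop 1 <+: (x :: w) := (List.prefix_append _ [z]).trans hpre'
  cases u with
  | nil => simp at hu
  | cons c t =>
    rw [List.cons_prefix_cons] at hupre
    obtain ⟨rfl, htw⟩ := hupre
    have htx : t = List.replicate t.length c := prefix_two_replicate t c w (by simpa using hu'pre) htw
    have htlen : t.length = Rp w := by simp at hu; omega
    have hcons_eq : t ++ [c] = c :: t := by
      rw [htx]; rw [← List.replicate_succ', List.replicate_succ]
    have hxt : t ++ [c] <:+: w := by
      rw [hcons_eq]
      exact (List.prefix_append (c :: t) [y']).isInfix.trans hinf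
    rcases eq_or_ne y' c with rfl | hy'x
    · -- the second extension letter is c itself; use the prefix u++[y] of c :: w
      have hty : t ++ [y] <+: w := by
        rw [List.cons_append, List.cons_prefix_cons] at hpre
        exact hpre.2
      exact Rp_mem w t htlen (RS_of_two (Ne.symm hne) hxt hty.isInfix)
    · have hty' : t ++ [y'] <:+: w := by
        have hsuf : t ++ [y'] <:+ (c :: t) ++ [y'] := ⟨[c], by simp⟩
        exact hsuf.isInfix.trans hinf
      exact Rp_mem w t htlen (RS_of_two (Ne.symm hy'x) hxt hty')

lemma Kp_nil : Kp ([] : Word) = 0 :=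
  Nat.le_zero.mp (Nat.sInf_le ⟨[], List.suffix_refl _, rfl, occursOnce_self []⟩)

lemma Rp_nil : Rp ([] : Word) = 0 :=
  Nat.le_zero.mp (Nat.sInf_le (fun u hu => TR_top [] u (by simpa using hu)))

lemma Kp_add_Rp_le : ∀ w : Word, Kp w + Rp w ≤ w.length := by
  intro w
  induction w with
  | nil => simp [Kp_nil, Rp_nil]
  | cons x w ih =>
    by_cases h : IsClosedWord (x :: w)
    · have h1 := Kp_cons_closed h
      have h2 := Rp_cons_closed_le h
      simp only [List.length_cons]
      omega
    · have h1 := Kp_cons_open h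
      have h2 := Rp_cons_le_succ w x
      simp only [List.length_cons]
      omega


/-- behavior of `K` (and, for trapezoidal words, of `R`) under left extension. -/
theorem K_R_left_extension (w : Word) (x : AB) :
    (IsClosedWord (x :: w) → Kp (x :: w) = Kp w + 1) ∧
    (IsOpenWord (x :: w) → Kp (x :: w) = Kp w) ∧
    (IsTrapezoidal (x :: w) →
      (IsClosedWord (x :: w) → Rp (x :: w) = Rp w) ∧
      (IsOpenWord (x :: w) → Rp (x :: w) = Rp w + 1)) := by
  refine ⟨fun h => Kp_cons_closed h, fun h => Kp_cons_open h.2, fun htrap => ⟨?_, ?_⟩⟩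
  · intro h
    exact le_antisymm (Rp_cons_closed_le h) (Rp_cons_ge w x)
  · intro h
    have h1 := Kp_cons_open h.2
    have h2 := Rp_cons_le_succ w x
    have h3 := Kp_add_Rp_le w
    have h4 : (x :: w).length = Kp (x :: w) + Rp (x :: w) := htrap
    simp only [List.length_cons] at h4
    omega
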